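/- arXiv:1508.07267 — 5 statements merged into one kernel-verified Lean document; each statement's English description precedes it below -/
import Mathlib

section
/- For indicator functions f = 1_A and g = 1_B of measurable sets A, B in a product probability space (S, 𝕊, P) with P a product measure, the pointwise inequality 1_{A □ B}(x) ≤ max over disjoint K, L ⊆ {1,...,n} of f̲_K(x) · g̲_L(x) holds, where f̲_K(x) = ess inf_{y ∈ [x]_K} f(y) with respect to the product measure on coordinates in K^c, and similarly for g̲_L. -/
open MeasureTheory ENNReal

/-- The essential infimum of `f` over the set of points agreeing with `x` on the
coordinates in `K`, with respect to the product measure on the coordinates outside `K`. -/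
noncomputable def essInfK {n : ℕ} {S : Fin n → Type*} [∀ i, MeasurableSpace (S i)]
    (P : ∀ i, Measure (S i)) (f : (∀ i, S i) → ℝ≥0∞) (K : Finset (Fin n))
    (x : ∀ i, S i) : ℝ≥0∞ :=
  essInf (fun z : ∀ i : {i : Fin n // i ∉ K}, S i =>
      f (fun i => if h : i ∈ K then x i else z ⟨i, h⟩))
    (Measure.pi fun i : {i : Fin n // i ∉ K} => P i)

/-- `cylinder x K` is the set of points agreeing with `x` on the coordinates in `K`. -/
def cylinder {n : ℕ} {S : Fin n → Type*} (x : ∀ i, S i) (K : Finset (Fin n)) :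
    Set (∀ i, S i) :=
  {y | ∀ i ∈ K, y i = x i}

/-- The van den Berg–Kesten box operation. -/
def boxOp {n : ℕ} {S : Fin n → Type*} (A B : Set (∀ i, S i)) : Set (∀ i, S i) :=
  {x | ∃ K L : Finset (Fin n), Disjoint K L ∧ cylinder x K ⊆ A ∧ cylinder x L ⊆ B}

section essInfK

variable {n : ℕ} {S : Fin n → Type*} [∀ i, MeasurableSpace (S i)]
  (P : ∀ i, Measure (S i)) [∀ i, IsProbabilityMeasure (P i)]
  {f : (∀ i, S i) → ℝ≥0∞} {K : Finset (Fin n)} {x : ∀ i, S i}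

theorem essInfK_eq_of_forall_cylinder {c : ℝ≥0∞} (h : ∀ y ∈ cylinder x K, f y = c) :
    essInfK P f K x = c := by
  have hconst : (fun z : ∀ i : {i : Fin n // i ∉ K}, S i =>
      f (fun i => if h : i ∈ K then x i else z ⟨i, h⟩)) = fun _ => c :=
    funext fun z => h _ fun i hi => by simp [hi]
  rw [essInfK, hconst]
  exact essInf_const c (NeZero.ne _)

theorem essInfK_indicator_eq_one {A : Set (∀ i, S i)} (h : cylinder x K ⊆ A) :
    essInfK P (A.indicator 1) K x = 1 :=
  essInfK_eq_of_forall_cylinder P fun _ hy => Set.indicator_of_mem (h hy) _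

end essInfK

theorem indicator_boxOp_le_general {n : ℕ} {S : Fin n → Type*} [∀ i, MeasurableSpace (S i)]
    (P : ∀ i, Measure (S i)) [∀ i, IsProbabilityMeasure (P i)]
    (A B : Set (∀ i, S i))
    (x : ∀ i, S i) :
    (boxOp A B).indicator (1 : (∀ i, S i) → ℝ≥0∞) x ≤
      ⨆ (K : Finset (Fin n)) (L : Finset (Fin n)) (_ : Disjoint K L),
        essInfK P (A.indicator 1) K x * essInfK P (B.indicator 1) L x := by
  refine Set.indicator_apply_le' (fun ⟨K, L, hKL, hK, hL⟩ => ?_) fun _ => zero_le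
  refine le_iSup_of_le K <| le_iSup_of_le L <| le_iSup_of_le hKL ?_
  rw [essInfK_indicator_eq_one P hK, essInfK_indicator_eq_one P hL, one_mul]
  rfl

/-- For indicators `f = 1_A`, `g = 1_B` of measurable sets, pointwise
`1_{A □ B}(x) ≤ max` over disjoint `K, L` of `f̲_K(x) ⬝ g̲_L(x)`. -/
theorem indicator_boxOp_le {n : ℕ} {S : Fin n → Type*} [∀ i, MeasurableSpace (S i)]
    (P : ∀ i, Measure (S i)) [∀ i, IsProbabilityMeasure (P i)]
    (A B : Set (∀ i, S i)) (hA : MeasurableSet A) (hB : MeasurableSet B)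
    (x : ∀ i, S i) :
    (boxOp A B).indicator (1 : (∀ i, S i) → ℝ≥0∞) x ≤
      ⨆ (K : Finset (Fin n)) (L : Finset (Fin n)) (_ : Disjoint K L),
        essInfK P (A.indicator 1) K x * essInfK P (B.indicator 1) L x :=
  indicator_boxOp_le_general P A B x
end

section
/- Functional BKR inequality (b) implies (a): if for all nonnegative measurable f, g one has E[max over disjoint K, L ⊆ {1,...,n} of f̲_K(X)g̲_L(X)] ≤ E[f(X)]E[g(X)], then for any countable collections {f_α}, {g_β} of nonnegative functions depending on K_α, L_β respectively, E[sup over disjoint α, β of f_α(X)g_β(X)] ≤ E[sup_α f_α(X)] · E[sup_β g_β(X)]. -/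
open MeasureTheory ENNReal

/-- `f` depends (only) on the coordinates in `K`. -/
def DepOn {n : ℕ} {S : Fin n → Type*} (f : (∀ i, S i) → ℝ≥0∞) (K : Finset (Fin n)) :
    Prop :=
  ∀ x y : ∀ i, S i, (∀ i ∈ K, x i = y i) → f x = f y

/-! A function `h ≤ F` depending only on the coordinates in `K` satisfies `h ≤ essInfK P F K`,
since moving the coordinates outside `K` does not change `h`. So every term `f a x * g b x` of
the left side of (a) is dominated by a term of the maximum in (b) for `F = ⨆ a, f a` and
`G = ⨆ b, g b`, and (b) applied to `F`, `G` gives (a). -/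

section

variable {n : ℕ} {S : Fin n → Type*} [∀ i, MeasurableSpace (S i)]

lemma le_essInfK_of_depOn (P : ∀ i, Measure (S i)) {h F : (∀ i, S i) → ℝ≥0∞}
    {K : Finset (Fin n)} (hd : DepOn h K) (hle : h ≤ F) (x : ∀ i, S i) :
    h x ≤ essInfK P F K x := by
  refine le_essInf_of_ae_le _ (Filter.Eventually.of_forall fun z => ?_)
  calc h x = h (fun i => if hi : i ∈ K then x i else z ⟨i, hi⟩) :=
        hd _ _ fun i hi => by simp [hi]
    _ ≤ _ := hle _

lemma iSup_disjoint_mul_le_iSup_essInfK_mul (P : ∀ i, Measure (S i)) {ι κ : Type*}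
    {f : ι → (∀ i, S i) → ℝ≥0∞} {g : κ → (∀ i, S i) → ℝ≥0∞}
    {K : ι → Finset (Fin n)} {L : κ → Finset (Fin n)}
    (hfd : ∀ a, DepOn (f a) (K a)) (hgd : ∀ b, DepOn (g b) (L b)) (x : ∀ i, S i) :
    ⨆ (a : ι) (b : κ) (_ : Disjoint (K a) (L b)), f a x * g b x ≤
      ⨆ (K : Finset (Fin n)) (L : Finset (Fin n)) (_ : Disjoint K L),
        essInfK P (fun y => ⨆ a, f a y) K x * essInfK P (fun y => ⨆ b, g b y) L x := by
  refine iSup_le fun a => iSup_le fun b => iSup_le fun hKL => ?_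
  exact le_iSup_of_le (K a) <| le_iSup_of_le (L b) <| le_iSup_of_le hKL <|
    mul_le_mul' (le_essInfK_of_depOn P (hfd a) (fun y => le_iSup (f · y) a) x)
      (le_essInfK_of_depOn P (hgd b) (fun y => le_iSup (g · y) b) x)

end

theorem bkr_b_implies_a_general {n : ℕ} {S : Fin n → Type*} [∀ i, MeasurableSpace (S i)]
    (P : ∀ i, Measure (S i))
    (hb : ∀ f g : (∀ i, S i) → ℝ≥0∞, Measurable f → Measurable g →
      ∫⁻ x, ⨆ (K : Finset (Fin n)) (L : Finset (Fin n)) (_ : Disjoint K L),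
          essInfK P f K x * essInfK P g L x ∂(Measure.pi P) ≤
        (∫⁻ x, f x ∂(Measure.pi P)) * ∫⁻ x, g x ∂(Measure.pi P))
    (ι κ : Type) [Countable ι] [Countable κ]
    (f : ι → (∀ i, S i) → ℝ≥0∞) (g : κ → (∀ i, S i) → ℝ≥0∞)
    (K : ι → Finset (Fin n)) (L : κ → Finset (Fin n))
    (hfm : ∀ a, Measurable (f a)) (hgm : ∀ b, Measurable (g b))
    (hfd : ∀ a, DepOn (f a) (K a)) (hgd : ∀ b, DepOn (g b) (L b)) :
    ∫⁻ x, ⨆ (a : ι) (b : κ) (_ : Disjoint (K a) (L b)), f a x * g b x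
        ∂(Measure.pi P) ≤
      (∫⁻ x, ⨆ a, f a x ∂(Measure.pi P)) * ∫⁻ x, ⨆ b, g b x ∂(Measure.pi P) := by
  have hF : Measurable fun y => ⨆ a, f a y := Measurable.iSup hfm
  have hG : Measurable fun y => ⨆ b, g b y := Measurable.iSup hgm
  exact (lintegral_mono (iSup_disjoint_mul_le_iSup_essInfK_mul P hfd hgd)).trans
    (hb _ _ hF hG)

/-- Functional BKR inequality (b) implies version (a): if for all nonnegative measurable
`f, g` the essential-infimum inequality holds with maxima over all pairs of disjoint
subsets of `{1,…,n}`, then for countable collections `{f_α}, {g_β}` of nonnegative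
measurable functions depending on `K_α, L_β` respectively, inequality (a) holds. -/
theorem bkr_b_implies_a {n : ℕ} {S : Fin n → Type*} [∀ i, MeasurableSpace (S i)]
    (P : ∀ i, Measure (S i)) [∀ i, IsProbabilityMeasure (P i)]
    (hb : ∀ f g : (∀ i, S i) → ℝ≥0∞, Measurable f → Measurable g →
      ∫⁻ x, ⨆ (K : Finset (Fin n)) (L : Finset (Fin n)) (_ : Disjoint K L),
          essInfK P f K x * essInfK P g L x ∂(Measure.pi P) ≤
        (∫⁻ x, f x ∂(Measure.pi P)) * ∫⁻ x, g x ∂(Measure.pi P))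
    (ι κ : Type) [Countable ι] [Countable κ]
    (f : ι → (∀ i, S i) → ℝ≥0∞) (g : κ → (∀ i, S i) → ℝ≥0∞)
    (K : ι → Finset (Fin n)) (L : κ → Finset (Fin n))
    (hfm : ∀ a, Measurable (f a)) (hgm : ∀ b, Measurable (g b))
    (hfd : ∀ a, DepOn (f a) (K a)) (hgd : ∀ b, DepOn (g b) (L b)) :
    ∫⁻ x, ⨆ (a : ι) (b : κ) (_ : Disjoint (K a) (L b)), f a x * g b x
        ∂(Measure.pi P) ≤
      (∫⁻ x, ⨆ a, f a x ∂(Measure.pi P)) * ∫⁻ x, ⨆ b, g b x ∂(Measure.pi P) :=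
  bkr_b_implies_a_general P hb ι κ f g K L hfm hgm hfd hgd
end

section
/- Let {f_α}_{α=1}^m be functions ℝⁿ → ℝ, all coordinatewise increasing. Let X = (X_1,...,X_n) have independent coordinates, Y an independent copy of X, and for H_α ⊆ {1,...,n} define Z_α with (Z_α)_i = Y_i if i ∈ H_α and X_i otherwise. Set U = (f_1(Z_1),...,f_m(Z_m)) and V = (f_1(X),...,f_m(X)). Then for every c ∈ ℝᵐ, P(U ≥ c) ≤ P(V ≥ c) and P(U ≤ c) ≤ P(V ≤ c), where inequalities between vectors are coordinatewise. -/
/-!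
View `(X, Y)` as one random point of `ℝ^(n ⊕ n)` with product law. For monotone measurable
`g_α ≥ 0`, the mean of `∏_α g_α(Z_α)` can only grow when one coordinate `a` is switched back
from `Y_a` to `X_a` in every `Z_α`: freezing all other coordinates, the factors that read `Y_a`
form a monotone function `Ψ(Y_a)` and the others a monotone `Φ(X_a)`, and Chebyshev's
inequality `E Ψ · E Φ ≤ E[Ψ Φ]` for the common law of `X_a` and `Y_a` is the required step.
Switching back all coordinates and taking indicators of upper sets gives `P(U ≥ c) ≤ P(V ≥ c)`;
negating everything gives the lower inequality.

As the `f_α` need not be measurable, an upper set `S` is first replaced by the upper closure of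
its points on a countable dense grid containing all atoms of the marginals. The difference is
null: by induction on the dimension, a leftover point either has a leftover tail in a slice of
`S` at a grid level, or its first coordinate is the unique non-grid threshold of its tail, and
such a threshold is not an atom.
-/

open MeasureTheory ProbabilityTheory
open scoped ENNReal

lemma ENNReal.mul_add_mul_le_mul_add_mul {a b c d : ℝ≥0∞} (hab : a ≤ b) (hcd : c ≤ d) :
    a * d + b * c ≤ a * c + b * d := by
  obtain ⟨u, rfl⟩ := exists_add_of_le hab
  obtain ⟨v, rfl⟩ := exists_add_of_le hcd
  calc a * (c + v) + (a + u) * c = a * c + (a * c + a * v + u * c) := by ring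
    _ ≤ a * c + (a * c + a * v + u * c) + u * v := le_self_add
    _ = a * c + (a + u) * (c + v) := by ring

section Chebyshev

variable {α : Type*} [LinearOrder α] [MeasurableSpace α] {μ : Measure α}
  [IsProbabilityMeasure μ] {Φ Ψ : α → ℝ≥0∞}

theorem lintegral_mul_lintegral_le_lintegral_mul (hΦm : Measurable Φ) (hΨm : Measurable Ψ)
    (hΦ : Monotone Φ) (hΨ : Monotone Ψ) :
    (∫⁻ x, Φ x ∂μ) * ∫⁻ x, Ψ x ∂μ ≤ ∫⁻ x, Φ x * Ψ x ∂μ := by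
  have hrearr (x y : α) : Φ x * Ψ y + Φ y * Ψ x ≤ Φ x * Ψ x + Φ y * Ψ y := by
    rcases le_total x y with h | h
    · exact ENNReal.mul_add_mul_le_mul_add_mul (hΦ h) (hΨ h)
    · rw [add_comm (Φ x * Ψ y), add_comm (Φ x * Ψ x)]
      exact ENNReal.mul_add_mul_le_mul_add_mul (hΦ h) (hΨ h)
  have hcross : ∫⁻ x, ∫⁻ y, Φ x * Ψ y + Φ y * Ψ x ∂μ ∂μ
      = 2 * ((∫⁻ x, Φ x ∂μ) * ∫⁻ x, Ψ x ∂μ) := by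
    simp_rw [lintegral_add_left (hΨm.const_mul _), lintegral_const_mul _ hΨm,
      lintegral_mul_const _ hΦm]
    rw [lintegral_add_left (hΦm.mul_const _), lintegral_mul_const _ hΦm,
      lintegral_const_mul _ hΨm]
    ring
  have hdiag : ∫⁻ x, ∫⁻ y, Φ x * Ψ x + Φ y * Ψ y ∂μ ∂μ = 2 * ∫⁻ x, Φ x * Ψ x ∂μ := by
    simp_rw [lintegral_add_left measurable_const, lintegral_const, measure_univ, mul_one]
    rw [lintegral_add_right _ measurable_const, lintegral_const, measure_univ, mul_one, two_mul]
  rw [← ENNReal.mul_le_mul_iff_right two_ne_zero ENNReal.ofNat_ne_top, ← hcross, ← hdiag]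
  exact lintegral_mono fun x => lintegral_mono fun y => hrearr x y

theorem lintegral_lintegral_prod_ite_le {κ : Type*} [Fintype κ] (k : κ → α → ℝ≥0∞)
    (hkm : ∀ j, Measurable (k j)) (hk : ∀ j, Monotone (k j)) (p : κ → Prop) [DecidablePred p] :
    ∫⁻ x, ∫⁻ y, ∏ j, (if p j then k j y else k j x) ∂μ ∂μ ≤ ∫⁻ x, ∏ j, k j x ∂μ := by
  set Ψ : α → ℝ≥0∞ := fun y => ∏ j with p j, k j y
  set Φ : α → ℝ≥0∞ := fun x => ∏ j with ¬p j, k j x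
  have hΨm : Measurable Ψ := Finset.measurable_prod _ fun j _ => hkm j
  have hΦm : Measurable Φ := Finset.measurable_prod _ fun j _ => hkm j
  have hΨ : Monotone Ψ := fun _ _ h => Finset.prod_le_prod' fun j _ => hk j h
  have hΦ : Monotone Φ := fun _ _ h => Finset.prod_le_prod' fun j _ => hk j h
  calc ∫⁻ x, ∫⁻ y, ∏ j, (if p j then k j y else k j x) ∂μ ∂μ
      = ∫⁻ x, (∫⁻ y, Ψ y ∂μ) * Φ x ∂μ := by
        have hsplit (x y : α) : ∏ j, (if p j then k j y else k j x) = Ψ y * Φ x :=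
          Finset.prod_ite _ _
        simp_rw [hsplit, lintegral_mul_const _ hΨm]
    _ = (∫⁻ y, Ψ y ∂μ) * ∫⁻ x, Φ x ∂μ := lintegral_const_mul _ hΦm
    _ ≤ ∫⁻ x, Ψ x * Φ x ∂μ := lintegral_mul_lintegral_le_lintegral_mul hΨm hΦm hΨ hΦ
    _ = ∫⁻ x, ∏ j, k j x ∂μ := by
        simp_rw [Ψ, Φ, Finset.prod_filter_mul_prod_filter_not]

end Chebyshev

section Marginal

variable {δ : Type*} [DecidableEq δ] {X : δ → Type*} [∀ i, MeasurableSpace (X i)]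
  {μ : ∀ i, Measure (X i)}

theorem lmarginal_pair (f : (∀ i, X i) → ℝ≥0∞) (hf : Measurable f) {i j : δ} (hij : i ≠ j)
    (x : ∀ i, X i) [∀ i, SigmaFinite (μ i)] :
    (∫⋯∫⁻_{i, j}, f ∂μ) x
      = ∫⁻ u, ∫⁻ v, f (Function.update (Function.update x i u) j v) ∂μ j ∂μ i := by
  rw [lmarginal_insert _ hf (Finset.notMem_singleton.2 hij)]
  simp only [lmarginal_singleton]

theorem lintegral_le_lintegral_of_lmarginal_le [Fintype δ] [∀ i, SigmaFinite (μ i)]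
    [Nonempty (∀ i, X i)] {f g : (∀ i, X i) → ℝ≥0∞} (hf : Measurable f) (hg : Measurable g)
    (s : Finset δ) (hfg : ∀ x, (∫⋯∫⁻_s, f ∂μ) x ≤ (∫⋯∫⁻_s, g ∂μ) x) :
    ∫⁻ x, f x ∂Measure.pi μ ≤ ∫⁻ x, g x ∂Measure.pi μ := by
  obtain ⟨x₀⟩ := ‹Nonempty (∀ i, X i)›
  have hsplit {h : (∀ i, X i) → ℝ≥0∞} (hh : Measurable h) :
      ∫⁻ x, h x ∂Measure.pi μ = (∫⋯∫⁻_(Finset.univ \ s), ∫⋯∫⁻_s, h ∂μ ∂μ) x₀ := by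
    rw [lintegral_eq_lmarginal_univ x₀, ← lmarginal_union μ h hh Finset.sdiff_disjoint,
      Finset.sdiff_union_of_subset (Finset.subset_univ s)]
  rw [hsplit hf, hsplit hg]
  exact lmarginal_mono hfg x₀

end Marginal

section Swap

variable {ι : Type*} [DecidableEq ι]

-- For `z : ι ⊕ ι → α` encoding the pair `(X, Y) = (z ∘ Sum.inl, z ∘ Sum.inr)`,
-- `z ∘ selectCopy H_α` is the paper's `Z_α`.
def selectCopy (K : Finset ι) (i : ι) : ι ⊕ ι := if i ∈ K then .inr i else .inl i

@[simp]
theorem selectCopy_empty : selectCopy (∅ : Finset ι) = Sum.inl := by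
  funext i; simp [selectCopy]

theorem selectCopy_injective (K : Finset ι) : Function.Injective (selectCopy K) := by
  intro i i' h
  unfold selectCopy at h
  split_ifs at h <;> simpa using h

theorem Sum.elim_comp_selectCopy {β : Type*} (x y : ι → β) (K : Finset ι) :
    Sum.elim x y ∘ selectCopy K = K.piecewise y x := by
  funext i
  by_cases hi : i ∈ K <;> simp [selectCopy, hi]

theorem update_update_comp_selectCopy {α : Type*} (x : ι ⊕ ι → α) (K : Finset ι) (a : ι)
    (u v : α) :
    Function.update (Function.update x (.inl a) u) (.inr a) v ∘ selectCopy K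
      = Function.update (x ∘ selectCopy K) a (if a ∈ K then v else u) := by
  funext i
  rcases eq_or_ne i a with rfl | hne
  · by_cases hi : i ∈ K <;> simp [selectCopy, hi]
  · by_cases hi : i ∈ K <;> simp [selectCopy, hi, hne]

theorem update_comp_selectCopy_erase {α : Type*} (x : ι ⊕ ι → α) (K : Finset ι) (a : ι)
    (v : α) :
    Function.update (x ∘ selectCopy (K.erase a)) a v
      = Function.update (x ∘ selectCopy K) a v := by
  funext i
  rcases eq_or_ne i a with rfl | hne
  · simp
  · simp [selectCopy, hne]

variable {κ α : Type*} [Fintype κ] [LinearOrder α] [MeasurableSpace α]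
  (μ : ι → Measure α) [∀ i, IsProbabilityMeasure (μ i)]
  {g : κ → (ι → α) → ℝ≥0∞} (hgm : ∀ j, Measurable (g j)) (hg : ∀ j, Monotone (g j))
include hgm hg

theorem lintegral_prod_comp_selectCopy_le_erase [Fintype ι] (H : κ → Finset ι) (a : ι) :
    ∫⁻ z, ∏ j, g j (z ∘ selectCopy (H j)) ∂Measure.pi (Sum.elim μ μ)
      ≤ ∫⁻ z, ∏ j, g j (z ∘ selectCopy ((H j).erase a)) ∂Measure.pi (Sum.elim μ μ) := by
  have hFm (K : κ → Finset ι) :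
      Measurable fun z : ι ⊕ ι → α => ∏ j, g j (z ∘ selectCopy (K j)) :=
    Finset.measurable_prod _ fun j _ =>
      (hgm j).comp (measurable_pi_lambda _ fun i => measurable_pi_apply _)
  have : Nonempty α := ⟨(nonempty_of_isProbabilityMeasure (μ a)).some⟩
  have (s : ι ⊕ ι) : IsProbabilityMeasure (Sum.elim μ μ s) := by
    cases s <;> dsimp <;> infer_instance
  refine lintegral_le_lintegral_of_lmarginal_le (hFm H) (hFm _) {.inl a, .inr a} fun x => ?_
  rw [lmarginal_pair _ (hFm H) Sum.inl_ne_inr, lmarginal_pair _ (hFm _) Sum.inl_ne_inr]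
  simp only [update_update_comp_selectCopy, update_comp_selectCopy_erase, Finset.notMem_erase,
    if_false, Sum.elim_inl, Sum.elim_inr, lintegral_const, measure_univ, mul_one]
  set k : κ → α → ℝ≥0∞ := fun j => g j ∘ Function.update (x ∘ selectCopy (H j)) a
  calc _ = ∫⁻ u, ∫⁻ v, ∏ j, (if a ∈ H j then k j v else k j u) ∂μ a ∂μ a := by
        refine lintegral_congr fun u => lintegral_congr fun v =>
          Finset.prod_congr rfl fun j _ => ?_
        split_ifs <;> rfl
    _ ≤ ∫⁻ u, ∏ j, k j u ∂μ a :=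
        lintegral_lintegral_prod_ite_le k (fun j => (hgm j).comp (measurable_update _))
          (fun j => (hg j).comp Function.update_mono) (fun j => a ∈ H j)

theorem lintegral_prod_comp_selectCopy_le [Fintype ι] (H : κ → Finset ι) :
    ∫⁻ z, ∏ j, g j (z ∘ selectCopy (H j)) ∂Measure.pi (Sum.elim μ μ)
      ≤ ∫⁻ z, ∏ j, g j (z ∘ Sum.inl) ∂Measure.pi (Sum.elim μ μ) := by
  suffices ∀ s : Finset ι, ∀ H : κ → Finset ι, (∀ j, H j ⊆ s) →
      ∫⁻ z, ∏ j, g j (z ∘ selectCopy (H j)) ∂Measure.pi (Sum.elim μ μ)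
        ≤ ∫⁻ z, ∏ j, g j (z ∘ Sum.inl) ∂Measure.pi (Sum.elim μ μ) from
    this Finset.univ H fun j => Finset.subset_univ _
  intro s
  induction s using Finset.induction_on with
  | empty => intro H hH; simp [Finset.subset_empty.1 (hH _)]
  | insert a s _ ih =>
    intro H hH
    exact (lintegral_prod_comp_selectCopy_le_erase μ hgm hg H a).trans
      (ih _ fun j => Finset.subset_insert_iff.1 (hH j))

end Swap

theorem indicator_setOf_forall_mem {κ β γ : Type*} [Fintype κ] (φ : κ → β → γ)
    (G : κ → Set γ) (z : β) :
    {z | ∀ j, φ j z ∈ G j}.indicator (1 : β → ℝ≥0∞) z = ∏ j, (G j).indicator 1 (φ j z) := by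
  by_cases h : ∀ j, φ j z ∈ G j
  · simp [h, Set.indicator_of_mem]
  · obtain ⟨j, hj⟩ := not_forall.1 h
    rw [Set.indicator_of_notMem (show z ∉ {z | ∀ j, φ j z ∈ G j} from h),
      Finset.prod_eq_zero (Finset.mem_univ j) (Set.indicator_of_notMem hj _)]

theorem IsUpperSet.monotone_indicator_one {β : Type*} [Preorder β] {s : Set β}
    (hs : IsUpperSet s) : Monotone (s.indicator (1 : β → ℝ≥0∞)) := by
  intro x y hxy
  by_cases hx : x ∈ s
  · simp [hx, hs hxy hx]
  · simp [hx]

section Independent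

variable {Ω ι α : Type*} [MeasurableSpace Ω] {P : Measure Ω} [Fintype ι] [MeasurableSpace α]
  {X Y : ι → Ω → α}
  (hXm : ∀ i, Measurable (X i)) (hYm : ∀ i, Measurable (Y i))
  (hindep : iIndepFun (Sum.elim X Y) P) (hid : ∀ i, P.map (Y i) = P.map (X i))
include hXm hYm hindep hid

theorem map_sumElim_eq_pi :
    P.map (fun ω s => Sum.elim X Y s ω)
      = Measure.pi (Sum.elim (fun i => P.map (X i)) (fun i => P.map (X i))) := by
  rw [hindep.map_fun_eq_pi_map (Sum.forall.2 ⟨fun i => (hXm i).aemeasurable,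
    fun i => (hYm i).aemeasurable⟩)]
  congr 1
  funext s
  cases s <;> simp [hid]

theorem map_piecewise_eq_pi [DecidableEq ι] (K : Finset ι) :
    P.map (fun ω => K.piecewise (fun i => Y i ω) (fun i => X i ω))
      = Measure.pi fun i => P.map (X i) := by
  have hm (i : ι) : Measurable (Sum.elim X Y (selectCopy K i)) := by
    unfold selectCopy; split_ifs <;> simp [hXm, hYm]
  have hZ : (fun ω => K.piecewise (fun i => Y i ω) (fun i => X i ω))
      = fun ω i => Sum.elim X Y (selectCopy K i) ω := by
    funext ω i
    by_cases hi : i ∈ K <;> simp [selectCopy, hi]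
  rw [hZ, (hindep.precomp (selectCopy_injective K)).map_fun_eq_pi_map
    fun i => (hm i).aemeasurable]
  congr 1
  funext i
  by_cases hi : i ∈ K <;> simp [selectCopy, hi, hid]

theorem measure_forall_piecewise_mem_le [IsProbabilityMeasure P] [DecidableEq ι] [LinearOrder α]
    {κ : Type*} [Fintype κ]
    (G : κ → Set (ι → α)) (hGm : ∀ j, MeasurableSet (G j)) (hG : ∀ j, IsUpperSet (G j))
    (H : κ → Finset ι) :
    P {ω | ∀ j, (H j).piecewise (fun i => Y i ω) (fun i => X i ω) ∈ G j}
      ≤ P {ω | ∀ j, (fun i => X i ω) ∈ G j} := by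
  set μ : ι → Measure α := fun i => P.map (X i)
  have : ∀ i, IsProbabilityMeasure (μ i) := fun i =>
    Measure.isProbabilityMeasure_map (hXm i).aemeasurable
  set T : Ω → ι ⊕ ι → α := fun ω s => Sum.elim X Y s ω
  have hTm : Measurable T := measurable_pi_lambda _ (Sum.forall.2 ⟨hXm, hYm⟩)
  have hT (ω : Ω) : T ω = Sum.elim (fun i => X i ω) (fun i => Y i ω) := by
    funext s; cases s <;> rfl
  have hlaw (K : κ → Finset ι) :
      P {ω | ∀ j, (K j).piecewise (fun i => Y i ω) (fun i => X i ω) ∈ G j}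
        = ∫⁻ z, ∏ j, (G j).indicator 1 (z ∘ selectCopy (K j)) ∂Measure.pi (Sum.elim μ μ) := by
    have hAm : MeasurableSet {z : ι ⊕ ι → α | ∀ j, z ∘ selectCopy (K j) ∈ G j} :=
      Set.ofPred_forall _ ▸ MeasurableSet.iInter fun j =>
        (hGm j).preimage (measurable_pi_lambda _ fun i => measurable_pi_apply _)
    have hset : {ω | ∀ j, (K j).piecewise (fun i => Y i ω) (fun i => X i ω) ∈ G j}
        = T ⁻¹' {z | ∀ j, z ∘ selectCopy (K j) ∈ G j} := by
      ext ω; simp [hT, Sum.elim_comp_selectCopy]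
    rw [hset, ← Measure.map_apply hTm hAm, map_sumElim_eq_pi hXm hYm hindep hid,
      ← lintegral_indicator_one hAm]
    exact lintegral_congr fun z => indicator_setOf_forall_mem _ _ z
  calc P {ω | ∀ j, (H j).piecewise (fun i => Y i ω) (fun i => X i ω) ∈ G j}
      = ∫⁻ z, ∏ j, (G j).indicator 1 (z ∘ selectCopy (H j)) ∂Measure.pi (Sum.elim μ μ) :=
        hlaw H
    _ ≤ ∫⁻ z, ∏ j, (G j).indicator 1 (z ∘ Sum.inl) ∂Measure.pi (Sum.elim μ μ) :=
        lintegral_prod_comp_selectCopy_le μ (fun j => measurable_one.indicator (hGm j))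
          (fun j => (hG j).monotone_indicator_one) H
    _ = P {ω | ∀ j, (fun i => X i ω) ∈ G j} := by simpa using (hlaw fun _ => ∅).symm

end Independent

section Threshold

variable {β : Type*}

-- `t ∉ D` is the threshold above which `b ∈ A q` for the grid points `q ∈ D`.
def thresholdSet (D : Set ℝ) (A : ℝ → Set β) : Set (ℝ × β) :=
  {p | p.1 ∉ D ∧ ∀ q ∈ D, (p.2 ∈ A q ↔ p.1 < q)}

theorem measurableSet_thresholdSet [MeasurableSpace β] {D : Set ℝ} (hD : D.Countable)
    {A : ℝ → Set β} (hA : ∀ q, MeasurableSet (A q)) : MeasurableSet (thresholdSet D A) := by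
  have hiff (q : ℝ) : MeasurableSet {p : ℝ × β | p.2 ∈ A q ↔ p.1 < q} :=
    measurableSet_setOfPred.2 <| (measurableSet_setOfPred.1 (measurable_snd (hA q))).iff
      (measurableSet_setOfPred.1 (measurable_fst measurableSet_Iio))
  have : thresholdSet D A = Prod.fst ⁻¹' Dᶜ ∩ ⋂ q ∈ D, {p | p.2 ∈ A q ↔ p.1 < q} := by
    ext p; simp [thresholdSet]
  rw [this]
  exact (measurable_fst hD.measurableSet.compl).inter (.biInter hD fun q _ => hiff q)

theorem subsingleton_thresholdSet_section {D : Set ℝ} (hD : Dense D) (A : ℝ → Set β) (b : β) :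
    {t | (t, b) ∈ thresholdSet D A}.Subsingleton := by
  have hle {t t' : ℝ} (ht : (t, b) ∈ thresholdSet D A) (ht' : (t', b) ∈ thresholdSet D A) :
      t' ≤ t := by
    by_contra! hlt
    obtain ⟨q, hq, htq, hqt'⟩ := hD.exists_between hlt
    exact hqt'.not_gt ((ht'.2 q hq).1 ((ht.2 q hq).2 htq))
  exact fun t ht t' ht' => le_antisymm (hle ht' ht) (hle ht ht')

theorem prod_thresholdSet_eq_zero [MeasurableSpace β] {μ : Measure ℝ} {ν : Measure β}
    [SFinite μ] [SFinite ν]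
    {D : Set ℝ} (hDc : D.Countable) (hDd : Dense D) (hDa : ∀ t, μ {t} ≠ 0 → t ∈ D)
    {A : ℝ → Set β} (hA : ∀ q, MeasurableSet (A q)) :
    μ.prod ν (thresholdSet D A) = 0 := by
  rw [Measure.prod_apply_symm (measurableSet_thresholdSet hDc hA)]
  have hsection (b : β) : μ ((fun t => (t, b)) ⁻¹' thresholdSet D A) = 0 := by
    change μ {t | (t, b) ∈ thresholdSet D A} = 0
    rcases (subsingleton_thresholdSet_section hDd A b).eq_empty_or_singleton with h | ⟨t, h⟩
    · rw [h, measure_empty]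
    · have ht : (t, b) ∈ thresholdSet D A := h.symm.subset rfl
      rw [h]
      exact not_not.1 (mt (hDa t) ht.1)
  simp [hsection]

end Threshold

section GridClosure

def gridClosure {ι : Type*} (D : ι → Set ℝ) (S : Set (ι → ℝ)) : Set (ι → ℝ) :=
  upperClosure (S ∩ Set.univ.pi D)

variable {ι : Type*} {D : ι → Set ℝ} {S : Set (ι → ℝ)}

theorem mem_gridClosure {x : ι → ℝ} :
    x ∈ gridClosure D S ↔ ∃ p ∈ S, (∀ i, p i ∈ D i) ∧ p ≤ x := by
  simp [gridClosure, and_assoc]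

theorem gridClosure_subset (hS : IsUpperSet S) : gridClosure D S ⊆ S :=
  upperClosure_min Set.inter_subset_left hS

theorem isUpperSet_gridClosure : IsUpperSet (gridClosure D S) :=
  (upperClosure _).upper

theorem measurableSet_gridClosure [Finite ι] (hD : ∀ i, (D i).Countable) :
    MeasurableSet (gridClosure D S) := by
  have hgrid : (S ∩ Set.univ.pi D).Countable :=
    (Set.countable_univ_pi hD).mono Set.inter_subset_right
  rw [gridClosure, coe_upperClosure]
  exact .biUnion hgrid fun p _ => measurableSet_Ici

-- A point of `S` above no grid point of `S` either has a tail above no grid point of some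
-- slice of `S` at a grid level, or its first coordinate is the threshold of its tail.
theorem diff_gridClosure_subset {n : ℕ} {S : Set (Fin (n + 1) → ℝ)} (hS : IsUpperSet S)
    (D : Fin (n + 1) → Set ℝ) :
    S \ gridClosure D S ⊆ (fun x => (x 0, Fin.tail x)) ⁻¹'
      ((⋃ q ∈ D 0, Set.univ ×ˢ ({x' | Fin.cons q x' ∈ S} \
          gridClosure (Fin.tail D) {x' | Fin.cons q x' ∈ S})) ∪
        thresholdSet (D 0) fun q => gridClosure (Fin.tail D) {x' | Fin.cons q x' ∈ S}) := by
  rintro x ⟨hxS, hxn⟩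
  set W : ℝ → Set (Fin n → ℝ) := fun q => {x' | Fin.cons q x' ∈ S}
  by_cases hbad : ∃ q ∈ D 0, Fin.tail x ∈ W q \ gridClosure (Fin.tail D) (W q)
  · obtain ⟨q, hq, h⟩ := hbad
    exact Or.inl (Set.mem_biUnion hq ⟨Set.mem_univ _, h⟩)
  have hgood (q : ℝ) (hq : q ∈ D 0) (hx : Fin.tail x ∈ W q) :
      Fin.tail x ∈ gridClosure (Fin.tail D) (W q) :=
    by_contra fun h => hbad ⟨q, hq, hx, h⟩
  have hlt (q : ℝ) (hq : q ∈ D 0) (hx : Fin.tail x ∈ gridClosure (Fin.tail D) (W q)) :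
      x 0 < q := by
    by_contra! hle
    obtain ⟨p, hpS, hpD, hpx⟩ := mem_gridClosure.1 hx
    refine hxn (mem_gridClosure.2 ⟨Fin.cons q p, hpS, ?_, Fin.cons_le.2 ⟨hle, hpx⟩⟩)
    exact Fin.forall_fin_succ.2
      ⟨by simpa using hq, fun j => by rw [Fin.cons_succ]; exact hpD j⟩
  have hW (q : ℝ) (hq : x 0 ≤ q) : Fin.tail x ∈ W q :=
    hS (Fin.le_cons.2 ⟨hq, le_rfl⟩) hxS
  exact Or.inr ⟨fun h0 => (hlt _ h0 (hgood _ h0 (hW _ le_rfl))).false,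
    fun q hq => ⟨hlt q hq, fun h => hgood q hq (hW q h.le)⟩⟩

theorem measure_diff_gridClosure_eq_zero {k : ℕ} (μ : Fin k → Measure ℝ)
    [∀ i, SigmaFinite (μ i)] {D : Fin k → Set ℝ} (hDc : ∀ i, (D i).Countable)
    (hDd : ∀ i, Dense (D i)) (hDa : ∀ i t, μ i {t} ≠ 0 → t ∈ D i) {S : Set (Fin k → ℝ)}
    (hS : IsUpperSet S) : Measure.pi μ (S \ gridClosure D S) = 0 := by
  induction k with
  | zero =>
    rw [Set.sdiff_eq_empty.2 fun x hx => mem_gridClosure.2 ⟨x, hx, fun i => i.elim0, le_rfl⟩,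
      measure_empty]
  | succ n ih =>
    have hW (q : ℝ) : IsUpperSet {x' | Fin.cons q x' ∈ S} := fun x y hxy hx =>
      hS (Fin.cons_le_cons.2 ⟨le_rfl, hxy⟩) hx
    refine measure_mono_null (diff_gridClosure_subset hS D) ?_
    refine ((measurePreserving_piFinSuccAbove μ 0).measure_preimage_equiv _).trans ?_
    simp only [Fin.succAbove_zero]
    refine measure_union_null ((measure_biUnion_null_iff (hDc 0)).2 fun q _ => ?_)
      (prod_thresholdSet_eq_zero (hDc 0) (hDd 0) (hDa 0)
        fun q => measurableSet_gridClosure fun j => hDc _)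
    rw [Measure.prod_prod]
    exact mul_eq_zero_of_right _ <| ih (fun j => μ j.succ) (D := Fin.tail D) (fun j => hDc _)
      (fun j => hDd _) (fun j => hDa _) (hW q)

theorem IsUpperSet.exists_measurableSet_subset_measure_diff_eq_zero {n : ℕ}
    {S : Set (Fin n → ℝ)} (hS : IsUpperSet S) (μ : Fin n → Measure ℝ)
    [∀ i, SigmaFinite (μ i)] :
    ∃ G ⊆ S, IsUpperSet G ∧ MeasurableSet G ∧ Measure.pi μ (S \ G) = 0 := by
  set D : Fin n → Set ℝ := fun i => Set.range ((↑) : ℚ → ℝ) ∪ {t | 0 < μ i {t}}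
  have hDc (i : Fin n) : (D i).Countable := by
    refine (Set.countable_range _).union ?_
    simpa using Measure.countable_meas_level_set_pos (μ := μ i) measurable_id
  have hDd (i : Fin n) : Dense (D i) := Rat.denseRange_cast.mono Set.subset_union_left
  exact ⟨gridClosure D S, gridClosure_subset hS, isUpperSet_gridClosure,
    measurableSet_gridClosure hDc, measure_diff_gridClosure_eq_zero μ hDc hDd
      (fun i t h => Or.inr (pos_iff_ne_zero.2 h)) hS⟩

end GridClosure

section Main

variable {Ω : Type*} [MeasurableSpace Ω] {P : Measure Ω} [IsProbabilityMeasure P] {n : ℕ}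
  {X Y : Fin n → Ω → ℝ} {κ : Type*} [Fintype κ]
  (hXm : ∀ i, Measurable (X i)) (hYm : ∀ i, Measurable (Y i))
  (hindep : iIndepFun (Sum.elim X Y) P) (hid : ∀ i, P.map (Y i) = P.map (X i))
include hXm hYm hindep hid

theorem measure_forall_piecewise_mem_le_of_isUpperSet (S : κ → Set (Fin n → ℝ))
    (hS : ∀ j, IsUpperSet (S j)) (H : κ → Finset (Fin n)) :
    P {ω | ∀ j, (H j).piecewise (fun i => Y i ω) (fun i => X i ω) ∈ S j}
      ≤ P {ω | ∀ j, (fun i => X i ω) ∈ S j} := by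
  have : ∀ i, IsProbabilityMeasure (P.map (X i)) := fun i =>
    Measure.isProbabilityMeasure_map (hXm i).aemeasurable
  choose G hGS hG hGm hnull using fun j =>
    (hS j).exists_measurableSet_subset_measure_diff_eq_zero fun i => P.map (X i)
  have hZm (K : Finset (Fin n)) :
      Measurable fun ω => K.piecewise (fun i => Y i ω) (fun i => X i ω) :=
    measurable_pi_lambda _ fun i => by
      by_cases hi : i ∈ K <;> simp [Finset.piecewise, hi, hXm, hYm]
  have hdiff (j : κ) :
      P ((fun ω => (H j).piecewise (fun i => Y i ω) (fun i => X i ω)) ⁻¹' (S j \ G j)) = 0 :=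
    le_zero_iff.1 <| (Measure.le_map_apply (hZm _).aemeasurable _).trans_eq <| by
      rw [map_piecewise_eq_pi hXm hYm hindep hid, hnull]
  calc P {ω | ∀ j, (H j).piecewise (fun i => Y i ω) (fun i => X i ω) ∈ S j}
      ≤ P {ω | ∀ j, (H j).piecewise (fun i => Y i ω) (fun i => X i ω) ∈ G j} := by
        refine measure_mono_ae ?_
        filter_upwards [ae_all_iff.2 fun j => measure_eq_zero_iff_ae_notMem.1 (hdiff j)]
          with ω hω hSω j using by_contra fun h => hω j ⟨hSω j, h⟩
    _ ≤ P {ω | ∀ j, (fun i => X i ω) ∈ G j} :=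
        measure_forall_piecewise_mem_le hXm hYm hindep hid G hGm hG H
    _ ≤ P {ω | ∀ j, (fun i => X i ω) ∈ S j} := measure_mono fun ω h j => hGS j (h j)

theorem measure_forall_piecewise_mem_le_of_isLowerSet (S : κ → Set (Fin n → ℝ))
    (hS : ∀ j, IsLowerSet (S j)) (H : κ → Finset (Fin n)) :
    P {ω | ∀ j, (H j).piecewise (fun i => Y i ω) (fun i => X i ω) ∈ S j}
      ≤ P {ω | ∀ j, (fun i => X i ω) ∈ S j} := by
  have hindep' : iIndepFun (Sum.elim (-X) (-Y)) P := by
    convert hindep.comp (fun _ x => -x) (fun _ => measurable_neg) using 1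
    funext s
    cases s <;> rfl
  have hid' (i : Fin n) : P.map ((-Y) i) = P.map ((-X) i) := by
    change P.map (Neg.neg ∘ Y i) = P.map (Neg.neg ∘ X i)
    rw [← Measure.map_map measurable_neg (hYm i), ← Measure.map_map measurable_neg (hXm i),
      hid i]
  have hnegZ (K : Finset (Fin n)) (ω : Ω) :
      -K.piecewise (fun i => -Y i ω) (fun i => -X i ω)
        = K.piecewise (fun i => Y i ω) (fun i => X i ω) := by
    funext i; by_cases hi : i ∈ K <;> simp [hi]
  have hnegX (ω : Ω) : (-fun i => -X i ω) = fun i => X i ω := by funext i; simp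
  simpa [hnegZ, hnegX] using
    measure_forall_piecewise_mem_le_of_isUpperSet (fun i => (hXm i).neg) (fun i => (hYm i).neg)
      hindep' hid' (fun j => -S j) (fun j => (hS j).neg) H

end Main

/-- PQD ordering theorem: for coordinatewise increasing functions `f_1, …, f_m` on
`ℝⁿ`, `X` with independent coordinates, `Y` an independent copy of `X`, and
`Z_α` obtained from `X` by swapping in the coordinates of `Y` on `H_α`, the vector
`V = (f_α(X))_α` is more positively quadrant dependent than `U = (f_α(Z_α))_α`:
for every `c ∈ ℝᵐ`, `P(U ≥ c) ≤ P(V ≥ c)` and `P(U ≤ c) ≤ P(V ≤ c)`. -/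
theorem pqd_ordering {Ω : Type*} [MeasurableSpace Ω] (P : Measure Ω)
    [IsProbabilityMeasure P] {n m : ℕ}
    (X Y : Fin n → Ω → ℝ)
    (hXm : ∀ i, Measurable (X i)) (hYm : ∀ i, Measurable (Y i))
    (hindep : iIndepFun
      (Sum.elim X Y) P)
    (hid : ∀ i, Measure.map (Y i) P = Measure.map (X i) P)
    (f : Fin m → (Fin n → ℝ) → ℝ) (hf : ∀ j, Monotone (f j))
    (H : Fin m → Finset (Fin n)) (c : Fin m → ℝ) :
    P {ω | ∀ j, c j ≤ f j (fun i => if i ∈ H j then Y i ω else X i ω)} ≤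
        P {ω | ∀ j, c j ≤ f j (fun i => X i ω)} ∧
      P {ω | ∀ j, f j (fun i => if i ∈ H j then Y i ω else X i ω) ≤ c j} ≤
        P {ω | ∀ j, f j (fun i => X i ω) ≤ c j} :=
  ⟨measure_forall_piecewise_mem_le_of_isUpperSet hXm hYm hindep hid
      (fun j => {x | c j ≤ f j x}) (fun j _ _ hxy hx => hx.trans (hf j hxy)) H,
    measure_forall_piecewise_mem_le_of_isLowerSet hXm hYm hindep hid
      (fun j => {x | f j x ≤ c j}) (fun j _ _ hxy hx => (hf j hxy).trans hx) H⟩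
end

section
/- Under the hypotheses of the PQD theorem (f_α all increasing, Z_α defined by swapping in coordinates of an independent copy on H_α), for every c ∈ ℝ: P(max_α f_α(Z_α) ≤ c) ≤ P(max_α f_α(X) ≤ c); equivalently max_α f_α(X) is stochastically dominated by max_α f_α(Z_α). -/
/-!
Write `v = (X, Y)` for the joint vector; its law is `Π (ν_i ⊗ ν_i)`. Swapping in the coordinates
of `Y` one index `a` at a time can only lower the probability that all the `f_α(Z_α)` stay `≤ c`:
conditionally on the other coordinates, the events `{f_α ≤ c}` are lower sets in the `a`-th
coordinate, and after the swap those with `a ∈ H_α` read `Y_a` while the others read `X_a`.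
The conditional probability is then `ν_a(A) ν_a(B)` instead of `ν_a(A ∩ B)`, and for two lower
sets of a line (which are nested) `ν(A) ν(B) ≤ ν(A ∩ B)`.

No measurability of the `f_α` is assumed, so the argument is run on measurable lower sets `M_α`
that contain `{f_α ≤ c}` and differ from it by a null set. These are obtained from a countable
dense grid in each coordinate containing all atoms of `ν_i`: by Fubini and induction on the
dimension, almost every one-dimensional slice of the exceptional set has at most one point, and
that point is not an atom.
-/

open MeasureTheory ProbabilityTheory Set Function

theorem IsLowerSet.measure_mul_le_measure_inter {α : Type*} [LinearOrder α] [MeasurableSpace α]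
    {μ : Measure α} [IsProbabilityMeasure μ] {s t : Set α} (hs : IsLowerSet s)
    (ht : IsLowerSet t) : μ s * μ t ≤ μ (s ∩ t) := by
  rcases hs.total ht with hst | hts
  · rw [inter_eq_left.2 hst]
    exact mul_le_of_le_one_right' prob_le_one
  · rw [inter_eq_right.2 hts]
    exact mul_le_of_le_one_left' prob_le_one

theorem measure_prod_setOf_forall_ite_mem_le {α ι : Type*} [LinearOrder α] [MeasurableSpace α]
    {μ : Measure α} [IsProbabilityMeasure μ] {C : ι → Set α} (hC : ∀ j, IsLowerSet (C j))
    (p : ι → Prop) [DecidablePred p] :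
    (μ.prod μ) {z | ∀ j, (if p j then z.2 else z.1) ∈ C j} ≤ μ (⋂ j, C j) := by
  have hprod : {z : α × α | ∀ j, (if p j then z.2 else z.1) ∈ C j}
      = (⋂ j, ⋂ _ : ¬ p j, C j) ×ˢ (⋂ j, ⋂ _ : p j, C j) := by
    ext z
    simp only [mem_ofPred_eq, mem_prod, mem_iInter]
    refine ⟨fun h => ⟨fun j hj => ?_, fun j hj => ?_⟩, fun h j => ?_⟩
    · simpa [hj] using h j
    · simpa [hj] using h j
    · by_cases hj : p j <;> simp [hj, h.1 j, h.2 j]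
  have hinter : (⋂ j, ⋂ _ : ¬ p j, C j) ∩ (⋂ j, ⋂ _ : p j, C j) = ⋂ j, C j := by
    ext x
    simp only [mem_inter_iff, mem_iInter]
    exact ⟨fun h j => (em (p j)).elim (h.2 j) (h.1 j), fun h => ⟨fun j _ => h j, fun j _ => h j⟩⟩
  rw [hprod, Measure.prod_prod, ← hinter]
  exact (isLowerSet_iInter₂ fun j _ => hC j).measure_mul_le_measure_inter
    (isLowerSet_iInter₂ fun j _ => hC j)

section Marginal

variable {δ : Type*} [DecidableEq δ] {X : δ → Type*} [∀ i, MeasurableSpace (X i)]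
  (μ : ∀ i, Measure (X i)) [∀ i, SigmaFinite (μ i)]

theorem lmarginal_pair_indicator_one {i k : δ} (hik : i ≠ k) {E : Set (∀ i, X i)}
    (hE : MeasurableSet E) (x : ∀ i, X i) :
    (∫⋯∫⁻_{i, k}, E.indicator 1 ∂μ) x
      = ((μ i).prod (μ k)) {z | update (update x i z.1) k z.2 ∈ E} := by
  have hm : Measurable fun z : X i × X k => update (update x i z.1) k z.2 := by fun_prop
  change _ = ((μ i).prod (μ k)) ((fun z : X i × X k => update (update x i z.1) k z.2) ⁻¹' E)
  rw [lmarginal_insert _ (measurable_one.indicator hE) (by simpa using hik),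
    Measure.prod_apply (hm hE)]
  simp only [lmarginal_singleton]
  refine lintegral_congr fun s => ?_
  rw [← lintegral_indicator_one ((hm hE).preimage measurable_prodMk_left)]
  rfl

theorem measure_pi_le_of_forall_prod_le [Fintype δ] {i k : δ} (hik : i ≠ k) {A B : Set (∀ i, X i)}
    (hA : MeasurableSet A) (hB : MeasurableSet B)
    (h : ∀ x : ∀ i, X i, ((μ i).prod (μ k)) {z | update (update x i z.1) k z.2 ∈ A}
      ≤ ((μ i).prod (μ k)) {z | update (update x i z.1) k z.2 ∈ B}) :
    Measure.pi μ A ≤ Measure.pi μ B := by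
  rcases isEmpty_or_nonempty (∀ i, X i) with hX | ⟨⟨x₀⟩⟩
  · simp [eq_empty_of_isEmpty A]
  rw [← lintegral_indicator_one hA, ← lintegral_indicator_one hB,
    lintegral_eq_lmarginal_univ x₀, lintegral_eq_lmarginal_univ x₀]
  refine lmarginal_le_of_subset (Finset.subset_univ {i, k}) (measurable_one.indicator hA)
    (measurable_one.indicator hB) (fun x => ?_) x₀
  rw [lmarginal_pair_indicator_one μ hik hA, lmarginal_pair_indicator_one μ hik hB]
  exact h x

end Marginal

instance isProbabilityMeasure_sumElim {ι ι' α : Type*} [MeasurableSpace α] (μ : ι → Measure α)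
    (ν : ι' → Measure α) [∀ i, IsProbabilityMeasure (μ i)] [∀ i, IsProbabilityMeasure (ν i)]
    (k : ι ⊕ ι') : IsProbabilityMeasure (Sum.elim μ ν k) := by
  cases k <;> dsimp only [Sum.elim_inl, Sum.elim_inr] <;> infer_instance

theorem map_comp_inl_pi_sumElim {ι ι' α : Type*} [Fintype ι] [Fintype ι'] [MeasurableSpace α]
    (μ : ι → Measure α) (ν : ι' → Measure α) [∀ i, IsProbabilityMeasure (μ i)]
    [∀ i, IsProbabilityMeasure (ν i)] :
    (Measure.pi (Sum.elim μ ν)).map (· ∘ Sum.inl) = Measure.pi μ := by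
  calc (Measure.pi (Sum.elim μ ν)).map (· ∘ Sum.inl)
      = ((Measure.pi (Sum.elim μ ν)).map (MeasurableEquiv.sumPiEquivProdPi _)).map Prod.fst := by
        rw [Measure.map_map measurable_fst (MeasurableEquiv.measurable _)]; rfl
    _ = Measure.pi μ := by
        rw [(measurePreserving_sumPiEquivProdPi (Sum.elim μ ν)).map_eq, Measure.map_fst_prod]
        simp

theorem ProbabilityTheory.iIndepFun.map_sumElim_eq_pi {Ω ι β : Type*} [Fintype ι]
    [MeasurableSpace Ω] [MeasurableSpace β] {P : Measure Ω} {X Y : ι → Ω → β}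
    (hXm : ∀ i, Measurable (X i)) (hYm : ∀ i, Measurable (Y i))
    (hindep : iIndepFun (Sum.elim X Y) P) (hid : ∀ i, P.map (Y i) = P.map (X i)) :
    P.map (fun ω k => Sum.elim X Y k ω)
      = Measure.pi (Sum.elim (fun i => P.map (X i)) fun i => P.map (X i)) := by
  rw [hindep.map_fun_eq_pi_map (Sum.forall.2 ⟨fun i => (hXm i).aemeasurable,
    fun i => (hYm i).aemeasurable⟩)]
  congr 1
  ext1 (i | i)
  exacts [rfl, hid i]

section Mix

variable {ι : Type*} [DecidableEq ι]

/-- For `v = (X, Y)`, `mix S v` is `X` with the coordinates in `S` replaced by those of `Y`. -/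
def mix (S : Finset ι) (v : ι ⊕ ι → ℝ) : ι → ℝ :=
  fun i => if i ∈ S then v (.inr i) else v (.inl i)

@[fun_prop]
theorem measurable_mix (S : Finset ι) : Measurable (mix S) :=
  measurable_pi_lambda _ fun i => by unfold mix; split_ifs <;> exact measurable_pi_apply _

theorem mix_empty (v : ι ⊕ ι → ℝ) : mix ∅ v = v ∘ Sum.inl := by
  ext i; simp [mix]

theorem mix_update_update {S : Finset ι} {a : ι} (ha : a ∉ S) (v : ι ⊕ ι → ℝ) (s t : ℝ) :
    mix S (update (update v (.inl a) s) (.inr a) t) = update (mix S v) a s := by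
  ext i
  rcases eq_or_ne i a with rfl | hi
  · simp [mix, ha]
  · simp [mix, hi]

theorem mix_insert_update_update {S : Finset ι} (a : ι) (v : ι ⊕ ι → ℝ) (s t : ℝ) :
    mix (insert a S) (update (update v (.inl a) s) (.inr a) t) = update (mix S v) a t := by
  ext i
  rcases eq_or_ne i a with rfl | hi
  · simp [mix]
  · simp [mix, hi]

variable {J : Type*} [Countable J] (ν : ι → Measure ℝ) [∀ i, IsProbabilityMeasure (ν i)]
  {K : J → Set (ι → ℝ)}

theorem measurableSet_setOf_forall_mix_mem (hK : ∀ j, MeasurableSet (K j)) (S : J → Finset ι) :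
    MeasurableSet {v | ∀ j, mix (S j) v ∈ K j} := by
  simp only [ofPred_forall]
  exact .iInter fun j => measurable_mix _ (hK j)

variable [Fintype ι]

theorem measure_pi_mix_inter_insert_le (hKm : ∀ j, MeasurableSet (K j))
    (hKl : ∀ j, IsLowerSet (K j)) (H : J → Finset ι) {a : ι} {T : Finset ι} (ha : a ∉ T) :
    Measure.pi (Sum.elim ν ν) {v | ∀ j, mix (H j ∩ insert a T) v ∈ K j}
      ≤ Measure.pi (Sum.elim ν ν) {v | ∀ j, mix (H j ∩ T) v ∈ K j} := by
  refine measure_pi_le_of_forall_prod_le _ (Sum.inl_ne_inr (a := a) (b := a))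
    (measurableSet_setOf_forall_mix_mem hKm _) (measurableSet_setOf_forall_mix_mem hKm _)
    fun x => ?_
  set C : J → Set ℝ := fun j => {t | update (mix (H j ∩ T) x) a t ∈ K j}
  have hC : ∀ j, IsLowerSet (C j) := fun j _ _ hts ht => hKl j (update_mono hts) ht
  have haT : ∀ j, a ∉ H j ∩ T := fun j h => ha (Finset.mem_inter.1 h).2
  have hA : {z : ℝ × ℝ | update (update x (.inl a) z.1) (.inr a) z.2
        ∈ {v | ∀ j, mix (H j ∩ insert a T) v ∈ K j}}
      = {z | ∀ j, (if a ∈ H j then z.2 else z.1) ∈ C j} := by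
    ext z
    refine forall_congr' fun j => ?_
    by_cases hj : a ∈ H j
    · simp [C, hj, Finset.inter_insert_of_mem hj, mix_insert_update_update]
    · simp [C, hj, Finset.inter_insert_of_notMem hj, mix_update_update (haT j)]
  have hB : {z : ℝ × ℝ | update (update x (.inl a) z.1) (.inr a) z.2
        ∈ {v | ∀ j, mix (H j ∩ T) v ∈ K j}} = (⋂ j, C j) ×ˢ univ := by
    ext z
    simp [C, mix_update_update (haT _)]
  rw [hA, hB, Measure.prod_prod, measure_univ, mul_one]
  exact measure_prod_setOf_forall_ite_mem_le hC _

theorem measure_pi_setOf_forall_mix_mem_le (hKm : ∀ j, MeasurableSet (K j))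
    (hKl : ∀ j, IsLowerSet (K j)) (H : J → Finset ι) :
    Measure.pi (Sum.elim ν ν) {v | ∀ j, mix (H j) v ∈ K j} ≤ Measure.pi ν (⋂ j, K j) := by
  have hstep : ∀ T : Finset ι, Measure.pi (Sum.elim ν ν) {v | ∀ j, mix (H j ∩ T) v ∈ K j}
      ≤ Measure.pi (Sum.elim ν ν) {v | ∀ j, mix ∅ v ∈ K j} := by
    intro T
    induction T using Finset.induction_on with
    | empty => simp
    | insert a T ha ih => exact (measure_pi_mix_inter_insert_le ν hKm hKl H ha).trans ih
  calc _ = Measure.pi (Sum.elim ν ν) {v | ∀ j, mix (H j ∩ Finset.univ) v ∈ K j} := by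
        simp only [Finset.inter_univ]
    _ ≤ _ := hstep Finset.univ
    _ = Measure.pi ν (⋂ j, K j) := by
      rw [← map_comp_inl_pi_sumElim ν ν, Measure.map_apply (by fun_prop) (.iInter hKm)]
      congr 1
      ext v
      simp [mix_empty]

end Mix

theorem MeasureTheory.Measure.countable_setOf_measure_singleton_ne_zero {α : Type*}
    [MeasurableSpace α] [MeasurableSingletonClass α] (μ : Measure α) [SFinite μ] :
    {x | μ {x} ≠ 0}.Countable := by
  simpa only [pos_iff_ne_zero] using Measure.countable_meas_pos_of_disjoint_iUnion
    (μ := μ) measurableSet_singleton fun _ _ h => disjoint_singleton.2 h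

theorem measure_eq_zero_of_disjoint_Icc {ν : Measure ℝ} {D S : Set ℝ} (hD : Dense D)
    (hatom : ∀ x, ν {x} ≠ 0 → x ∈ D) (hS : ∀ t₁ ∈ S, ∀ t₂ ∈ S, Disjoint (Icc t₁ t₂) D) :
    ν S = 0 := by
  have hnlt : ∀ t₁ ∈ S, ∀ t₂ ∈ S, ¬ t₁ < t₂ := fun t₁ h₁ t₂ h₂ hlt =>
    let ⟨_, hr, hr'⟩ := hD.exists_between hlt
    disjoint_left.1 (hS t₁ h₁ t₂ h₂) (Ioo_subset_Icc_self hr') hr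
  have hsub : S.Subsingleton := fun t₁ h₁ t₂ h₂ =>
    le_antisymm (not_lt.1 (hnlt t₂ h₂ t₁ h₁)) (not_lt.1 (hnlt t₁ h₁ t₂ h₂))
  rcases hsub.eq_empty_or_singleton with rfl | ⟨t, rfl⟩
  · exact measure_empty
  · have := hS t rfl t rfl
    rw [Icc_self, disjoint_singleton_left] at this
    exact not_not.1 (mt (hatom t) this)

section Grid

variable {k : ℕ}

def gridHull (D : Fin k → Set ℝ) (L : Set (Fin k → ℝ)) : Set (Fin k → ℝ) :=
  {x | ∀ q ∈ univ.pi D, q ≤ x → q ∈ L}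

def gridCore (D : Fin k → Set ℝ) (L : Set (Fin k → ℝ)) : Set (Fin k → ℝ) :=
  {x | ∃ q ∈ univ.pi D ∩ L, x ≤ q}

variable {D : Fin k → Set ℝ} {L : Set (Fin k → ℝ)}

theorem subset_gridHull (hL : IsLowerSet L) : L ⊆ gridHull D L :=
  fun _ hx _ _ hq => hL hq hx

theorem gridCore_subset (hL : IsLowerSet L) : gridCore D L ⊆ L :=
  fun _ ⟨_, ⟨_, hqL⟩, hxq⟩ => hL hxq hqL

theorem isLowerSet_gridHull : IsLowerSet (gridHull D L) :=
  fun _ _ hyx hx q hq hqy => hx q hq (hqy.trans hyx)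

theorem measurableSet_gridHull (hD : ∀ i, (D i).Countable) : MeasurableSet (gridHull D L) := by
  have : gridHull D L = ⋂ q ∈ univ.pi D \ L, (Ici q)ᶜ := by
    ext x
    simp only [gridHull, mem_ofPred_eq, mem_iInter, Set.mem_sdiff, mem_compl_iff, mem_Ici, and_imp]
    exact forall₂_congr fun _ _ => not_imp_not.symm
  rw [this]
  exact .biInter ((Set.countable_univ_pi hD).mono sdiff_subset) fun _ _ => measurableSet_Ici.compl

theorem measurableSet_gridCore (hD : ∀ i, (D i).Countable) : MeasurableSet (gridCore D L) := by
  have : gridCore D L = ⋃ q ∈ univ.pi D ∩ L, Iic q := by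
    ext x
    simp [gridCore]
  rw [this]
  exact .biUnion ((Set.countable_univ_pi hD).mono inter_subset_left) fun _ _ => measurableSet_Iic

variable {D : Fin (k + 1) → Set ℝ} {L : Set (Fin (k + 1) → ℝ)}

theorem Fin.cons_mem_univ_pi {r : ℝ} {q : Fin k → ℝ} :
    Fin.cons r q ∈ univ.pi D ↔ r ∈ D 0 ∧ q ∈ univ.pi (Fin.tail D) := by
  simp [Fin.forall_fin_succ, Fin.tail]

theorem mem_gridHull_tail_of_cons_mem {r t : ℝ} {y : Fin k → ℝ} (hr : r ∈ D 0) (hrt : r ≤ t)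
    (h : Fin.cons t y ∈ gridHull D L) : y ∈ gridHull (Fin.tail D) {z | Fin.cons r z ∈ L} :=
  fun _ hq hqy => h _ (Fin.cons_mem_univ_pi.2 ⟨hr, hq⟩) (Fin.cons_le_cons.2 ⟨hrt, hqy⟩)

theorem cons_mem_gridCore_of_mem_tail {r t : ℝ} {y : Fin k → ℝ} (hr : r ∈ D 0) (htr : t ≤ r)
    (h : y ∈ gridCore (Fin.tail D) {z | Fin.cons r z ∈ L}) : Fin.cons t y ∈ gridCore D L := by
  obtain ⟨q, ⟨hq, hqL⟩, hyq⟩ := h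
  exact ⟨_, ⟨Fin.cons_mem_univ_pi.2 ⟨hr, hq⟩, hqL⟩, Fin.cons_le_cons.2 ⟨htr, hyq⟩⟩

theorem measure_slice_gridHull_diff_gridCore {ν : Measure ℝ} (hD : Dense (D 0))
    (hatom : ∀ x, ν {x} ≠ 0 → x ∈ D 0) {y : Fin k → ℝ}
    (hy : ∀ r ∈ D 0, y ∉ gridHull (Fin.tail D) {z | Fin.cons r z ∈ L} \
      gridCore (Fin.tail D) {z | Fin.cons r z ∈ L}) :
    ν {t | Fin.cons t y ∈ gridHull D L \ gridCore D L} = 0 := by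
  refine measure_eq_zero_of_disjoint_Icc hD hatom fun t₁ h₁ t₂ h₂ => ?_
  refine disjoint_right.2 fun r hr hrt => hy r hr ⟨?_, fun hcore => ?_⟩
  · exact mem_gridHull_tail_of_cons_mem hr hrt.2 h₂.1
  · exact h₁.2 (cons_mem_gridCore_of_mem_tail hr hrt.1 hcore)

theorem measurePreserving_cons {ν : Fin (k + 1) → Measure ℝ} [∀ i, SigmaFinite (ν i)] :
    MeasurePreserving (fun p : ℝ × (Fin k → ℝ) => (Fin.cons p.1 p.2 : Fin (k + 1) → ℝ))
      ((ν 0).prod (Measure.pi fun j => ν j.succ)) (Measure.pi ν) := by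
  have h := (measurePreserving_piFinSuccAbove ν 0).symm
  simp only [Fin.succAbove_zero] at h
  convert h using 1
  ext1 p
  simp [MeasurableEquiv.piFinSuccAbove]
  rfl

end Grid

theorem measure_pi_gridHull_diff_gridCore {k : ℕ} (ν : Fin k → Measure ℝ)
    [∀ i, SigmaFinite (ν i)] {D : Fin k → Set ℝ} (hDc : ∀ i, (D i).Countable)
    (hDd : ∀ i, Dense (D i)) (hDa : ∀ i x, ν i {x} ≠ 0 → x ∈ D i) {L : Set (Fin k → ℝ)}
    (hL : IsLowerSet L) : Measure.pi ν (gridHull D L \ gridCore D L) = 0 := by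
  induction k with
  | zero =>
    refine measure_mono_null (fun x hx => ?_) measure_empty
    exact hx.2 ⟨x, ⟨fun i => i.elim0, hx.1 x (fun i => i.elim0) le_rfl⟩, le_rfl⟩
  | succ k ih =>
    set S := gridHull D L \ gridCore D L
    have hS : MeasurableSet S := (measurableSet_gridHull hDc).diff (measurableSet_gridCore hDc)
    set Bad := ⋃ r ∈ D 0, gridHull (Fin.tail D) {z | Fin.cons r z ∈ L} \
      gridCore (Fin.tail D) {z | Fin.cons r z ∈ L}
    have hBad : (Measure.pi fun j => ν j.succ) Bad = 0 :=
      (measure_biUnion_null_iff (hDc 0)).2 fun r _ =>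
        ih (fun j => ν j.succ) (fun _ => hDc _) (fun _ => hDd _) (fun _ => hDa _)
          fun _ _ hyz hz => hL (Fin.cons_le_cons.2 ⟨le_rfl, hyz⟩) hz
    have hcons := measurePreserving_cons (ν := ν)
    rw [← hcons.measure_preimage hS.nullMeasurableSet,
      Measure.prod_apply_symm (hcons.measurable hS)]
    refine (lintegral_congr_ae ?_).trans lintegral_zero
    filter_upwards [measure_eq_zero_iff_ae_notMem.1 hBad] with y hy
    exact measure_slice_gridHull_diff_gridCore (hDd 0) (hDa 0) fun r hr h =>
      hy (mem_biUnion hr h)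

theorem IsLowerSet.exists_measurableSet_ae_eq {k : ℕ} (ν : Fin k → Measure ℝ)
    [∀ i, SigmaFinite (ν i)] {L : Set (Fin k → ℝ)} (hL : IsLowerSet L) :
    ∃ M, IsLowerSet M ∧ MeasurableSet M ∧ L ⊆ M ∧ M =ᵐ[Measure.pi ν] L := by
  set D : Fin k → Set ℝ := fun i => range ((↑) : ℚ → ℝ) ∪ {x | ν i {x} ≠ 0}
  have hDc : ∀ i, (D i).Countable := fun i =>
    (countable_range _).union ((ν i).countable_setOf_measure_singleton_ne_zero)
  have hDd : ∀ i, Dense (D i) := fun _ => Rat.denseRange_cast.mono subset_union_left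
  have hnull := measure_pi_gridHull_diff_gridCore ν hDc hDd (fun _ _ => Or.inr) hL
  refine ⟨gridHull D L, isLowerSet_gridHull, measurableSet_gridHull hDc, subset_gridHull hL,
    ae_eq_set.2 ⟨measure_mono_null (sdiff_subset_sdiff_right (gridCore_subset hL)) hnull, ?_⟩⟩
  rw [sdiff_eq_empty.2 (subset_gridHull hL), measure_empty]

/-- Corollary of the PQD ordering theorem: for coordinatewise increasing `f_α`, `X`
with independent coordinates, `Y` an independent copy of `X`, and `Z_α` obtained from
`X` by swapping in the coordinates of `Y` on `H_α`, for every `c ∈ ℝ`,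
`P(max_α f_α(Z_α) ≤ c) ≤ P(max_α f_α(X) ≤ c)`, i.e. `max_α f_α(X)` is stochastically
dominated by `max_α f_α(Z_α)`. -/
theorem pqd_max_st {Ω : Type*} [MeasurableSpace Ω] (P : Measure Ω)
    [IsProbabilityMeasure P] {n m : ℕ}
    (X Y : Fin n → Ω → ℝ)
    (hXm : ∀ i, Measurable (X i)) (hYm : ∀ i, Measurable (Y i))
    (hindep : iIndepFun
      (Sum.elim X Y) P)
    (hid : ∀ i, Measure.map (Y i) P = Measure.map (X i) P)
    (f : Fin m → (Fin n → ℝ) → ℝ) (hf : ∀ j, Monotone (f j))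
    (H : Fin m → Finset (Fin n)) (c : ℝ) :
    P {ω | ∀ j, f j (fun i => if i ∈ H j then Y i ω else X i ω) ≤ c} ≤
      P {ω | ∀ j, f j (fun i => X i ω) ≤ c} := by
  set ν : Fin n → Measure ℝ := fun i => P.map (X i)
  set W : Ω → Fin n ⊕ Fin n → ℝ := fun ω k => Sum.elim X Y k ω
  have : ∀ i, IsProbabilityMeasure (ν i) := fun i =>
    Measure.isProbabilityMeasure_map (hXm i).aemeasurable
  have hW : Measurable W := measurable_pi_lambda _ (Sum.forall.2 ⟨hXm, hYm⟩)
  have hlawW : P.map W = Measure.pi (Sum.elim ν ν) := hindep.map_sumElim_eq_pi hXm hYm hid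
  have hlawX : P.map (fun ω i => X i ω) = Measure.pi ν := by
    rw [← map_comp_inl_pi_sumElim ν ν, ← hlawW, Measure.map_map (by fun_prop) hW]
    rfl
  choose M hMl hMm hLM hML using fun j =>
    IsLowerSet.exists_measurableSet_ae_eq ν (L := {x | f j x ≤ c}) fun _ _ hyx hx =>
      (hf j hyx).trans hx
  have hMLinter := Filter.EventuallyEq.countable_iInter hML
  calc _ ≤ P (W ⁻¹' {v | ∀ j, mix (H j) v ∈ M j}) := by
        exact measure_mono fun ω hω j => hLM j (hω j)
    _ = Measure.pi (Sum.elim ν ν) {v | ∀ j, mix (H j) v ∈ M j} := by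
      rw [← hlawW, Measure.map_apply hW (measurableSet_setOf_forall_mix_mem hMm H)]
    _ ≤ Measure.pi ν (⋂ j, M j) := measure_pi_setOf_forall_mix_mem_le ν hMm hMl H
    _ = Measure.pi ν (⋂ j, {x | f j x ≤ c}) := measure_congr hMLinter
    _ = _ := by
      rw [← hlawX, Measure.map_apply₀ (by fun_prop)
        ((MeasurableSet.iInter hMm).nullMeasurableSet.congr (hlawX ▸ hMLinter))]
      congr 1
      ext ω
      simp
end

section
/- (Connecting the frameworks, direction (a) ⇒ (b)) Suppose inequality (a) holds for all countable collections of nonnegative functions depending on coordinate subsets. Then for any nonnegative measurable f, g and any collections 𝒦, ℒ ⊆ 2^{{1,...,n}}, E[max over disjoint K ∈ 𝒦, L ∈ ℒ of f̲_K(X)g̲_L(X)] ≤ E[f(X)] · E[g(X)], where f̲_K(x) = ess inf_{y ∈ [x]_K} f(y) (essential infimum over the coordinates outside K). -/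
/-! Apply (a) to the countable families `f̲_K` (`K ∈ 𝒦`) and `g̲_L` (`L ∈ ℒ`). Each `f̲_K` depends
only on the coordinates in `K`, and it is measurable because `essInf h ν` is the countable supremum
over rationals `q` of `q · 1[ν {h < q} = 0]`. Splitting `X` into its `K`-part and
its `Kᶜ`-part identifies `Measure.pi P` with a product measure, so Fubini gives `f̲_K ≤ f` almost
surely; hence `E[sup_K f̲_K] ≤ E[f]`, and likewise for `g`. -/

open MeasureTheory ENNReal

lemma ENNReal.essInf_eq_iSup_rat {β : Type*} [MeasurableSpace β] (ν : Measure β)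
    (g : β → ℝ≥0∞) :
    essInf g ν = ⨆ q : ℚ,
      if ν {z | g z < ENNReal.ofReal q} = 0 then ENNReal.ofReal q else 0 := by
  apply le_antisymm
  · refine le_of_forall_lt fun b hb => ?_
    obtain ⟨q, -, hbq, hq⟩ := ENNReal.lt_iff_exists_rat_btwn.1 hb
    have hnull : ν {z | g z < ENNReal.ofReal q} = 0 :=
      measure_mono_null (fun z hz => not_le.2 (lt_trans hz hq))
        (ae_iff.1 ae_essInf_le)
    exact hbq.trans_le (le_iSup_of_le q (by rw [if_pos hnull]; rfl))
  · refine iSup_le fun q => ?_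
    split_ifs with h
    · exact le_essInf_of_ae_le _ (by simpa [Filter.EventuallyLE, ae_iff, not_le] using h)
    · exact zero_le

theorem Measurable.essInf_prod_right {α β : Type*} [MeasurableSpace α] [MeasurableSpace β]
    {ν : Measure β} [SFinite ν] {F : α × β → ℝ≥0∞} (hF : Measurable F) :
    Measurable fun x => essInf (fun z => F (x, z)) ν := by
  simp_rw [ENNReal.essInf_eq_iSup_rat ν]
  refine Measurable.iSup fun q => Measurable.ite ?_ measurable_const measurable_const
  exact measurable_measure_prodMk_left (measurableSet_lt hF measurable_const)
    (measurableSet_singleton 0)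

theorem ae_essInf_prod_right_le {α β : Type*} [MeasurableSpace α] [MeasurableSpace β]
    {μ : Measure α} {ν : Measure β} [SFinite ν] {F : α × β → ℝ≥0∞} (hF : Measurable F) :
    ∀ᵐ p ∂(μ.prod ν), essInf (fun z => F (p.1, z)) ν ≤ F p := by
  have hs : MeasurableSet {p | F p < essInf (fun z => F (p.1, z)) ν} :=
    measurableSet_lt hF (hF.essInf_prod_right.comp measurable_fst)
  simp_rw [ae_iff, not_le]
  rw [Measure.measure_prod_null hs]
  refine Filter.Eventually.of_forall fun x => ?_
  simpa only [Pi.zero_apply, Set.preimage_ofPred_eq, ae_iff, not_le] using ae_essInf_le (μ := ν) (f := fun z => F (x, z))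

section essInfK

variable {n : ℕ} {S : Fin n → Type*} [∀ i, MeasurableSpace (S i)] (P : ∀ i, Measure (S i))

lemma depOn_essInfK (f : (∀ i, S i) → ℝ≥0∞) (K : Finset (Fin n)) :
    DepOn (essInfK P f K) K := by
  intro x y hxy
  unfold essInfK
  congr with z
  congr with i
  split_ifs with h
  exacts [hxy i h, rfl]

lemma essInfK_eq_essInf_piEquivPiSubtypeProd (f : (∀ i, S i) → ℝ≥0∞) (K : Finset (Fin n))
    (x : ∀ i, S i) :
    essInfK P f K x =
      essInf (fun z => f ((MeasurableEquiv.piEquivPiSubtypeProd S (· ∈ K)).symm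
        ((MeasurableEquiv.piEquivPiSubtypeProd S (· ∈ K) x).1, z)))
        (Measure.pi fun i : {i // i ∉ K} => P i) :=
  rfl

variable [∀ i, SigmaFinite (P i)] {f : (∀ i, S i) → ℝ≥0∞}

lemma measurable_essInfK (hf : Measurable f) (K : Finset (Fin n)) :
    Measurable (essInfK P f K) := by
  let e := MeasurableEquiv.piEquivPiSubtypeProd S (· ∈ K)
  simp_rw [funext (essInfK_eq_essInf_piEquivPiSubtypeProd P f K)]
  exact (hf.comp e.symm.measurable).essInf_prod_right.comp (measurable_fst.comp e.measurable)

lemma essInfK_ae_le (hf : Measurable f) (K : Finset (Fin n)) :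
    ∀ᵐ x ∂(Measure.pi P), essInfK P f K x ≤ f x := by
  have h := (measurePreserving_piEquivPiSubtypeProd P (· ∈ K)).quasiMeasurePreserving.ae
    (ae_essInf_prod_right_le
      (hf.comp (MeasurableEquiv.piEquivPiSubtypeProd S (· ∈ K)).symm.measurable))
  simpa only [Function.comp_apply, MeasurableEquiv.symm_apply_apply,
    ← essInfK_eq_essInf_piEquivPiSubtypeProd] using h

lemma lintegral_iSup_essInfK_le {ι : Type*} [Countable ι] (hf : Measurable f)
    (K : ι → Finset (Fin n)) :
    ∫⁻ x, ⨆ a, essInfK P f (K a) x ∂(Measure.pi P) ≤ ∫⁻ x, f x ∂(Measure.pi P) := by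
  refine lintegral_mono_ae ?_
  filter_upwards [ae_all_iff.2 fun a => essInfK_ae_le P hf (K a)] with x hx
  exact iSup_le hx

end essInfK

/-- Functional BKR inequality (a) implies version (b): from the inequality for countable
collections of nonnegative functions depending on coordinate subsets, one obtains, for
any nonnegative measurable `f, g` and any collections `𝒦, ℒ` of subsets of `{1,…,n}`,
`E[max over disjoint K ∈ 𝒦, L ∈ ℒ of f̲_K(X) g̲_L(X)] ≤ E[f(X)] E[g(X)]`. -/
theorem bkr_a_implies_b {n : ℕ} {S : Fin n → Type*} [∀ i, MeasurableSpace (S i)]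
    (P : ∀ i, Measure (S i)) [∀ i, IsProbabilityMeasure (P i)]
    (ha : ∀ (ι κ : Type) [Countable ι] [Countable κ]
      (f : ι → (∀ i, S i) → ℝ≥0∞) (g : κ → (∀ i, S i) → ℝ≥0∞)
      (K : ι → Finset (Fin n)) (L : κ → Finset (Fin n)),
      (∀ a, Measurable (f a)) → (∀ b, Measurable (g b)) →
      (∀ a, DepOn (f a) (K a)) → (∀ b, DepOn (g b) (L b)) →
      ∫⁻ x, ⨆ (a : ι) (b : κ) (_ : Disjoint (K a) (L b)), f a x * g b x
          ∂(Measure.pi P) ≤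
        (∫⁻ x, ⨆ a, f a x ∂(Measure.pi P)) * ∫⁻ x, ⨆ b, g b x ∂(Measure.pi P))
    (f g : (∀ i, S i) → ℝ≥0∞) (hf : Measurable f) (hg : Measurable g)
    (𝒦 ℒ : Set (Finset (Fin n))) :
    ∫⁻ x, ⨆ (K ∈ 𝒦) (L ∈ ℒ) (_ : Disjoint K L),
        essInfK P f K x * essInfK P g L x ∂(Measure.pi P) ≤
      (∫⁻ x, f x ∂(Measure.pi P)) * ∫⁻ x, g x ∂(Measure.pi P) := by
  calc ∫⁻ x, ⨆ (K ∈ 𝒦) (L ∈ ℒ) (_ : Disjoint K L),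
        essInfK P f K x * essInfK P g L x ∂(Measure.pi P)
      = ∫⁻ x, ⨆ (K : 𝒦) (L : ℒ) (_ : Disjoint K.1 L.1),
          essInfK P f K x * essInfK P g L x ∂(Measure.pi P) := by
        simp only [iSup_subtype]
    _ ≤ (∫⁻ x, ⨆ K : 𝒦, essInfK P f K x ∂(Measure.pi P)) *
          ∫⁻ x, ⨆ L : ℒ, essInfK P g L x ∂(Measure.pi P) :=
        ha 𝒦 ℒ _ _ _ _ (fun K => measurable_essInfK P hf K) (fun L => measurable_essInfK P hg L)
          (fun K => depOn_essInfK P f K) (fun L => depOn_essInfK P g L)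
    _ ≤ (∫⁻ x, f x ∂(Measure.pi P)) * ∫⁻ x, g x ∂(Measure.pi P) :=
        mul_le_mul' (lintegral_iSup_essInfK_le P hf _) (lintegral_iSup_essInfK_le P hg _)
end
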